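/- arXiv:1506.01362 — 2 statements merged into one kernel-verified Lean document; each statement's English description precedes it below -/
import Mathlib

section
/- Let $G_1$ be a connected graph on $[t]$ and let $G_2 = \bigsqcup_{i=1}^r H_i$ be a disjoint union of connected graphs $H_i$ on $[n_i]$, $r \geq 2$, all vertex sets disjoint. Then a nonempty subset $T$ of the vertices of $G_1 * G_2$ has the cut point property if and only if either $T = [t] \cup \bigcup_{i=1}^r T_i$ where each $T_i$ is (possibly empty and) has the cut point property for $H_i$, or $T = T_0 \cup \bigcup_{i=1}^r [n_i]$ where $T_0$ is nonempty and has the cut point property for $G_1$. -/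
open SimpleGraph Set

/-- Number of connected components of the induced subgraph of `G` on `s`. -/
noncomputable def nc {V : Type*} (G : SimpleGraph V) (s : Set V) : ℕ :=
  Nat.card (G.induce s).ConnectedComponent

/-- `T` has the cut point property for `G`: every `i ∈ T` is a cut point of the
induced subgraph on `Tᶜ ∪ {i}` (removing `i` increases the number of components). -/
def CutPointProperty {V : Type*} (G : SimpleGraph V) (T : Set V) : Prop :=
  ∀ i ∈ T, nc G (Tᶜ ∪ {i}) < nc G Tᶜ

/-- The join `G₁ * G₂` of two graphs on disjoint vertex sets. -/
def joinGraph {V₁ V₂ : Type*} (G₁ : SimpleGraph V₁) (G₂ : SimpleGraph V₂) :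
    SimpleGraph (V₁ ⊕ V₂) where
  Adj v w :=
    match v, w with
    | Sum.inl a, Sum.inl b => G₁.Adj a b
    | Sum.inr a, Sum.inr b => G₂.Adj a b
    | Sum.inl _, Sum.inr _ => True
    | Sum.inr _, Sum.inl _ => True
  symm := by constructor; rintro (a | a) (b | b) h <;> simp_all <;> exact h.symm
  loopless := by constructor; rintro (a | a) h <;> simp_all

/-- Disjoint union of an indexed family of graphs. -/
def sigmaGraph {ι : Type*} {V : ι → Type*} (G : ∀ i, SimpleGraph (V i)) :
    SimpleGraph (Σ i, V i) where
  Adj v w := ∃ h : v.1 = w.1, (G w.1).Adj (h ▸ v.2) w.2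
  symm := by
    constructor
    rintro ⟨i, a⟩ ⟨j, b⟩ ⟨h, hab⟩
    dsimp at h hab ⊢
    subst h
    exact ⟨rfl, hab.symm⟩
  loopless := by
    constructor
    rintro ⟨i, a⟩ ⟨h, hab⟩
    dsimp at h hab
    exact (G i).irrefl hab
/-- The corona `H ⊙ H'`: one copy of `H'` for each vertex `v` of `H`,
with every vertex of the copy joined to `v`. -/
def coronaGraph {V₁ V₂ : Type*} (H : SimpleGraph V₁) (H' : SimpleGraph V₂) :
    SimpleGraph (V₁ ⊕ V₁ × V₂) where
  Adj v w :=
    match v, w with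
    | Sum.inl a, Sum.inl b => H.Adj a b
    | Sum.inl a, Sum.inr p => a = p.1
    | Sum.inr p, Sum.inl b => p.1 = b
    | Sum.inr p, Sum.inr q => p.1 = q.1 ∧ H'.Adj p.2 q.2
  symm := by
    constructor
    rintro (a | p) (b | q) h <;> dsimp at h ⊢
    · exact h.symm
    · exact h.symm
    · exact h.symm
    · exact ⟨h.1.symm, h.2.symm⟩
  loopless := by constructor; rintro (a | p) h <;> simp_all

/-- The whisker graph `W(H)`: a pendant vertex attached to each vertex of `H`. -/
def whiskerGraph {V : Type*} (H : SimpleGraph V) : SimpleGraph (V ⊕ V) where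
  Adj v w :=
    match v, w with
    | Sum.inl a, Sum.inl b => H.Adj a b
    | Sum.inl a, Sum.inr b => a = b
    | Sum.inr a, Sum.inl b => a = b
    | Sum.inr _, Sum.inr _ => False
  symm := by constructor; rintro (a | a) (b | b) h <;> simp_all; exact h.symm
  loopless := by constructor; rintro (a | a) h <;> simp_all

/-- `F` is (the vertex set of) a maximal clique of `G`. -/
def MaxClique {V : Type*} (G : SimpleGraph V) (F : Set V) : Prop :=
  Maximal G.IsClique F

/-- A graph is chordal if every cycle of length at least 4 has a chord. -/
def IsChordal {V : Type*} (G : SimpleGraph V) : Prop :=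
  ∀ (n : ℕ), 4 ≤ n → ∀ c : ℕ → V, Set.InjOn c (Set.Iio n) →
    (∀ i < n, G.Adj (c i) (c ((i + 1) % n))) →
    ∃ i < n, ∃ j < n, j ≠ i ∧ j ≠ (i + 1) % n ∧ i ≠ (j + 1) % n ∧ G.Adj (c i) (c j)

/-- A generalized block graph: a connected chordal graph in which any three distinct
maximal cliques with nonempty common intersection have all pairwise intersections equal. -/
def GenBlockGraph {V : Type*} (G : SimpleGraph V) : Prop :=
  G.Connected ∧ IsChordal G ∧
    ∀ F₁ F₂ F₃ : Set V, MaxClique G F₁ → MaxClique G F₂ → MaxClique G F₃ →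
      F₁ ≠ F₂ → F₁ ≠ F₃ → F₂ ≠ F₃ → (F₁ ∩ F₂ ∩ F₃).Nonempty →
      F₁ ∩ F₂ = F₁ ∩ F₃ ∧ F₁ ∩ F₂ = F₂ ∩ F₃

/-- `A` is a cut set of `G`: deleting `A` increases the number of connected components. -/
def IsCutSet {V : Type*} (G : SimpleGraph V) (A : Set V) : Prop :=
  nc G Set.univ < nc G Aᶜ

/-- `A` is an inclusion-minimal cut set of `G`. -/
def IsMinCutSet {V : Type*} (G : SimpleGraph V) (A : Set V) : Prop :=
  IsCutSet G A ∧ ∀ B ⊂ A, ¬ IsCutSet G B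

/-- `A` is a `t`-minimal cut set of `G`: a minimal cut set which is the common
intersection of exactly `t` maximal cliques of `G` and disjoint from all other
maximal cliques. -/
def IsTMinCut {V : Type*} (G : SimpleGraph V) (t : ℕ) (A : Set V) : Prop :=
  IsMinCutSet G A ∧
  {F : Set V | MaxClique G F ∧ A ⊆ F}.ncard = t ∧
  ⋂₀ {F : Set V | MaxClique G F ∧ A ⊆ F} = A ∧
  ∀ F : Set V, MaxClique G F → ¬ A ⊆ F → F ∩ A = ∅

/-- `B` is a branch of the facet `F` in the clique complex of `G`. -/
def IsBranch {V : Type*} (G : SimpleGraph V) (F B : Set V) : Prop :=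
  MaxClique G B ∧ B ≠ F ∧ ∀ H : Set V, MaxClique G H → H ≠ F → H ∩ F ⊆ B ∩ F

/-- `F` is a leaf of the clique complex of `G`. -/
def IsLeafClique {V : Type*} (G : SimpleGraph V) (F : Set V) : Prop :=
  MaxClique G F ∧ ((∀ F' : Set V, MaxClique G F' → F' = F) ∨ ∃ B, IsBranch G F B)

/-! In a join every vertex of one side is adjacent to every vertex of the other, so an induced
subgraph meeting both sides is connected. If `Tᶜ` met both sides, `Tᶜ` and `Tᶜ ∪ {i}` would both
be connected and no `i ∈ T` could be a cut point; hence `T` contains one side entirely. If `T`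
contains `G₂ = ⨆ i, H i`, the condition at a vertex of `G₁` is the one in `G₁`, while at a vertex
of `G₂` it says that `G₁` restricted to `Tᶜ` has at least two components, which for connected `G₁`
means `T ∩ G₁ ≠ ∅`. If `T` contains `G₁`, the roles are swapped; since components of `⨆ i, H i`
add up over the `H i`, the condition splits into one for each `H i`, and the two components come
for free from `r ≥ 2`. -/

section ComponentCount

variable {W W' : Type*} {G : SimpleGraph W} {G' : SimpleGraph W'} {s : Set W}

lemma nc_congr {t : Set W'} (e : G.induce s ≃g G'.induce t) : nc G s = nc G' t :=
  Nat.card_congr e.connectedComponentEquiv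

lemma nc_image_embedding (f : G ↪g G') (s : Set W) : nc G' (f '' s) = nc G s := by
  rw [nc_congr (f.comp (Embedding.induce s)).isoInduceRange]
  congr 1
  ext
  simp

lemma nc_eq_one_of_connected (h : (G.induce s).Connected) : nc G s = 1 :=
  Nat.card_eq_one_iff_unique.mpr
    ⟨h.preconnected.subsingleton_connectedComponent, ⟨connectedComponentMk _ h.nonempty.some⟩⟩

lemma nc_singleton (v : W) : nc G {v} = 1 :=
  nc_eq_one_of_connected ((connected_iff _).mpr ⟨.of_subsingleton, inferInstance⟩)

lemma nc_univ_of_connected (h : G.Connected) : nc G univ = 1 :=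
  nc_eq_one_of_connected ((induceUnivIso G).connected_iff.mpr h)

lemma nc_pos [Finite W] (hs : s.Nonempty) : 0 < nc G s :=
  have : Nonempty s := hs.to_subtype
  Nat.card_pos

end ComponentCount

section CutPoints

variable {W W' : Type*} {G : SimpleGraph W} {G' : SimpleGraph W'} {T : Set W}

lemma cutPointProperty_image_iso (e : G ≃g G') :
    CutPointProperty G' (e '' T) ↔ CutPointProperty G T := by
  have hnc (s : Set W) : nc G' (e '' s) = nc G s := nc_image_embedding e.toEmbedding s
  simp only [CutPointProperty, forall_mem_image, ← image_compl_eq e.bijective, ← image_singleton,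
    ← image_union, hnc]

lemma CutPointProperty.one_lt_nc_compl [Finite W] (h : CutPointProperty G T) (hT : T.Nonempty) :
    1 < nc G Tᶜ := by
  obtain ⟨i, hi⟩ := hT
  have := nc_pos (G := G) (show (Tᶜ ∪ {i}).Nonempty from ⟨i, Or.inr rfl⟩)
  have := h i hi
  omega

lemma CutPointProperty.nc_compl_pos [Finite W] [Nonempty W] (h : CutPointProperty G T) :
    0 < nc G Tᶜ := by
  rcases T.eq_empty_or_nonempty with rfl | hT
  · exact nc_pos (by simp)
  · exact zero_lt_one.trans (h.one_lt_nc_compl hT)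

lemma CutPointProperty.one_lt_nc_compl_iff [Finite W] (hG : G.Connected)
    (h : CutPointProperty G T) : 1 < nc G Tᶜ ↔ T.Nonempty := by
  refine ⟨fun hlt => ?_, h.one_lt_nc_compl⟩
  rw [nonempty_iff_ne_empty]
  rintro rfl
  rw [compl_empty, nc_univ_of_connected hG] at hlt
  exact lt_irrefl _ hlt

end CutPoints

section Join

variable {V₁ V₂ : Type*} {G₁ : SimpleGraph V₁} {G₂ : SimpleGraph V₂}

def SimpleGraph.Embedding.joinInl (G₁ : SimpleGraph V₁) (G₂ : SimpleGraph V₂) :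
    G₁ ↪g joinGraph G₁ G₂ where
  toEmbedding := ⟨Sum.inl, Sum.inl_injective⟩
  map_rel_iff' := Iff.rfl

def SimpleGraph.Iso.joinComm (G₁ : SimpleGraph V₁) (G₂ : SimpleGraph V₂) :
    joinGraph G₁ G₂ ≃g joinGraph G₂ G₁ where
  toEquiv := Equiv.sumComm V₁ V₂
  map_rel_iff' := by rintro (a | a) (b | b) <;> exact Iff.rfl

lemma joinGraph_induce_connected {s : Set (V₁ ⊕ V₂)} (h₁ : ∃ a, Sum.inl a ∈ s)
    (h₂ : ∃ b, Sum.inr b ∈ s) : ((joinGraph G₁ G₂).induce s).Connected := by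
  obtain ⟨a, ha⟩ := h₁
  obtain ⟨b, hb⟩ := h₂
  have reach (x : s) : ((joinGraph G₁ G₂).induce s).Reachable x ⟨Sum.inr b, hb⟩ := by
    obtain ⟨x | x, hx⟩ := x
    · exact Adj.reachable trivial
    · have hxa : ((joinGraph G₁ G₂).induce s).Adj ⟨Sum.inr x, hx⟩ ⟨Sum.inl a, ha⟩ := trivial
      exact hxa.reachable.trans (Adj.reachable trivial)
  exact (connected_iff _).mpr ⟨fun x y => (reach x).trans (reach y).symm, ⟨⟨_, ha⟩⟩⟩

lemma nc_joinGraph_image_inl_union_singleton_inr (A : Set V₁) (b : V₂) :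
    nc (joinGraph G₁ G₂) (Sum.inl '' A ∪ {Sum.inr b}) = 1 := by
  rcases A.eq_empty_or_nonempty with rfl | ⟨a, ha⟩
  · rw [image_empty, empty_union, nc_singleton]
  · exact nc_eq_one_of_connected
      (joinGraph_induce_connected ⟨a, Or.inl (mem_image_of_mem _ ha)⟩ ⟨b, Or.inr rfl⟩)

lemma not_cutPointProperty_joinGraph {T : Set (V₁ ⊕ V₂)} (hT : T.Nonempty)
    (h₁ : ∃ a, Sum.inl a ∉ T) (h₂ : ∃ b, Sum.inr b ∉ T) :
    ¬ CutPointProperty (joinGraph G₁ G₂) T := by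
  obtain ⟨i, hi⟩ := hT
  obtain ⟨a, ha⟩ := h₁
  obtain ⟨b, hb⟩ := h₂
  intro h
  have hlt := h i hi
  rw [nc_eq_one_of_connected (joinGraph_induce_connected ⟨a, Or.inl ha⟩ ⟨b, Or.inl hb⟩),
    nc_eq_one_of_connected (joinGraph_induce_connected ⟨a, ha⟩ ⟨b, hb⟩)] at hlt
  exact lt_irrefl _ hlt

lemma cutPointProperty_joinGraph_image_inl_union_range_inr [Nonempty V₂] (A : Set V₁) :
    CutPointProperty (joinGraph G₁ G₂) (Sum.inl '' A ∪ range Sum.inr) ↔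
      CutPointProperty G₁ A ∧ 1 < nc G₁ Aᶜ := by
  have hcompl : (Sum.inl '' A ∪ range (Sum.inr : V₂ → V₁ ⊕ V₂))ᶜ = Sum.inl '' Aᶜ := by
    ext (a | b) <;> simp
  have hnc (s : Set V₁) : nc (joinGraph G₁ G₂) (Sum.inl '' s) = nc G₁ s :=
    nc_image_embedding (Embedding.joinInl G₁ G₂) s
  simp only [CutPointProperty, mem_union, or_imp, forall_and, forall_mem_image, forall_mem_range,
    hcompl, nc_joinGraph_image_inl_union_singleton_inr, hnc, forall_const]
  simp only [← image_singleton, ← image_union, hnc]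

lemma cutPointProperty_joinGraph_range_inl_union_image_inr [Nonempty V₁] (B : Set V₂) :
    CutPointProperty (joinGraph G₁ G₂) (range Sum.inl ∪ Sum.inr '' B) ↔
      CutPointProperty G₂ B ∧ 1 < nc G₂ Bᶜ := by
  rw [← cutPointProperty_image_iso (Iso.joinComm G₁ G₂),
    ← cutPointProperty_joinGraph_image_inl_union_range_inr (G₂ := G₁)]
  congr!
  ext (b | a) <;> simp [Iso.joinComm]

theorem cutPointProperty_joinGraph_iff [Nonempty V₁] [Nonempty V₂] {T : Set (V₁ ⊕ V₂)}
    (hT : T.Nonempty) :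
    CutPointProperty (joinGraph G₁ G₂) T ↔
      (∃ B, CutPointProperty G₂ B ∧ 1 < nc G₂ Bᶜ ∧ T = range Sum.inl ∪ Sum.inr '' B) ∨
      (∃ A, CutPointProperty G₁ A ∧ 1 < nc G₁ Aᶜ ∧ T = Sum.inl '' A ∪ range Sum.inr) := by
  constructor
  · intro h
    by_cases hinl : ∀ a, Sum.inl a ∈ T
    · have hT : T = range Sum.inl ∪ Sum.inr '' (Sum.inr ⁻¹' T) := by
        ext (a | b) <;> simp [hinl]
      rw [hT, cutPointProperty_joinGraph_range_inl_union_image_inr] at h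
      exact Or.inl ⟨_, h.1, h.2, hT⟩
    · push Not at hinl
      have hinr : ∀ b, Sum.inr b ∈ T := by
        by_contra! hinr
        exact not_cutPointProperty_joinGraph hT hinl hinr h
      have hT : T = Sum.inl '' (Sum.inl ⁻¹' T) ∪ range Sum.inr := by
        ext (a | b) <;> simp [hinr]
      rw [hT, cutPointProperty_joinGraph_image_inl_union_range_inr] at h
      exact Or.inr ⟨_, h.1, h.2, hT⟩
  · rintro (⟨B, hB, hB', rfl⟩ | ⟨A, hA, hA', rfl⟩)
    · exact (cutPointProperty_joinGraph_range_inl_union_image_inr B).2 ⟨hB, hB'⟩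
    · exact (cutPointProperty_joinGraph_image_inl_union_range_inr A).2 ⟨hA, hA'⟩

end Join

section Sigma

variable {ι : Type*} {V : ι → Type*} (H : ∀ i, SimpleGraph (V i))

def sigmaGraphInduceIso (S : Set (Σ i, V i)) :
    (sigmaGraph H).induce S ≃g sigmaGraph (fun i => (H i).induce {v | ⟨i, v⟩ ∈ S}) where
  toFun x := ⟨x.1.1, x.1.2, x.2⟩
  invFun y := ⟨⟨y.1, y.2.1⟩, y.2.2⟩
  left_inv _ := rfl
  right_inv _ := rfl
  map_rel_iff' := by
    rintro ⟨⟨i, v⟩, hv⟩ ⟨⟨j, w⟩, hw⟩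
    constructor <;> rintro ⟨h, hadj⟩ <;> dsimp at h <;> subst h <;> exact ⟨rfl, hadj⟩

lemma sigmaMk_connectedComponentMk_eq_of_reachable {v w : Σ i, V i}
    (h : (sigmaGraph H).Reachable v w) :
    (⟨v.1, (H v.1).connectedComponentMk v.2⟩ : Σ i, (H i).ConnectedComponent) =
      ⟨w.1, (H w.1).connectedComponentMk w.2⟩ := by
  obtain ⟨p⟩ := h
  induction p with
  | nil => rfl
  | @cons u v _ hadj _ ih =>
    obtain ⟨i, u⟩ := u
    obtain ⟨j, v⟩ := v
    obtain ⟨h, hadj⟩ := hadj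
    dsimp at h
    subst h
    exact (congrArg (Sigma.mk i) (ConnectedComponent.sound hadj.reachable)).trans ih

noncomputable def sigmaGraphConnectedComponentEquiv :
    (sigmaGraph H).ConnectedComponent ≃ Σ i, (H i).ConnectedComponent where
  toFun := ConnectedComponent.lift (fun v => ⟨v.1, (H v.1).connectedComponentMk v.2⟩)
    fun _ _ p _ => sigmaMk_connectedComponentMk_eq_of_reachable H p.reachable
  invFun y := y.2.map ⟨fun v => ⟨y.1, v⟩, fun h => ⟨rfl, h⟩⟩
  left_inv c := c.ind fun _ => rfl
  right_inv := by
    rintro ⟨i, c⟩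
    exact c.ind fun _ => rfl

lemma nc_sigmaGraph [Fintype ι] [∀ i, Finite (V i)] (S : Set (Σ i, V i)) :
    nc (sigmaGraph H) S = ∑ i, nc (H i) {v | ⟨i, v⟩ ∈ S} :=
  (Nat.card_congr ((sigmaGraphInduceIso H S).connectedComponentEquiv.trans
    (sigmaGraphConnectedComponentEquiv _))).trans Nat.card_sigma

variable {H}

lemma cutPointProperty_sigmaGraph_iff [Fintype ι] [∀ i, Finite (V i)] {S : Set (Σ i, V i)} :
    CutPointProperty (sigmaGraph H) S ↔ ∀ i, CutPointProperty (H i) {v | ⟨i, v⟩ ∈ S} := by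
  simp only [CutPointProperty, nc_sigmaGraph, Sigma.forall]
  refine forall_congr' fun j => forall₂_congr fun v _ => ?_
  have hfiber_ne (i : ι) (hi : i ≠ j) :
      {w | ⟨i, w⟩ ∈ Sᶜ ∪ {⟨j, v⟩}} = {w : V i | ⟨i, w⟩ ∈ Sᶜ} := by
    ext; simp [hi]
  have hfiber : {w | ⟨j, w⟩ ∈ Sᶜ ∪ {⟨j, v⟩}} = {w : V j | ⟨j, w⟩ ∈ S}ᶜ ∪ {v} := by
    ext; simp
  classical
  rw [← Finset.add_sum_erase _ _ (Finset.mem_univ j),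
    ← Finset.add_sum_erase _ _ (Finset.mem_univ j),
    Finset.sum_congr rfl fun i hi => by rw [hfiber_ne i (Finset.ne_of_mem_erase hi)], hfiber,
    add_lt_add_iff_right]
  rfl

lemma CutPointProperty.one_lt_nc_sigmaGraph_compl [Fintype ι] [∀ i, Finite (V i)]
    [∀ i, Nonempty (V i)] (hι : 1 < Fintype.card ι) {S : Set (Σ i, V i)}
    (h : CutPointProperty (sigmaGraph H) S) : 1 < nc (sigmaGraph H) Sᶜ :=
  calc 1 < Fintype.card ι := hι
    _ = ∑ _ : ι, 1 := by simp
    _ ≤ ∑ i, nc (H i) {v | ⟨i, v⟩ ∈ S}ᶜ :=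
      Finset.sum_le_sum fun i _ => (cutPointProperty_sigmaGraph_iff.mp h i).nc_compl_pos
    _ = nc (sigmaGraph H) Sᶜ := (nc_sigmaGraph H Sᶜ).symm

end Sigma

/-- the nonempty sets with the cut point property for the join of a connected
graph `G₁` with a disjoint union `⨆ i, H i` of `r ≥ 2` connected graphs. -/
theorem stmt2 {V₀ : Type*} [Fintype V₀] {r : ℕ} (hr : 2 ≤ r)
    {V : Fin r → Type*} [∀ i, Fintype (V i)]
    (G₁ : SimpleGraph V₀) (H : ∀ i, SimpleGraph (V i))
    (hG₁ : G₁.Connected) (hH : ∀ i, (H i).Connected)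
    (T : Set (V₀ ⊕ Σ i, V i)) (hT : T.Nonempty) :
    CutPointProperty (joinGraph G₁ (sigmaGraph H)) T ↔
      (∃ T' : ∀ i, Set (V i), (∀ i, CutPointProperty (H i) (T' i)) ∧
        T = Set.range Sum.inl ∪ Sum.inr '' {x : Σ i, V i | x.2 ∈ T' x.1}) ∨
      (∃ T₀ : Set V₀, T₀.Nonempty ∧ CutPointProperty G₁ T₀ ∧
        T = Sum.inl '' T₀ ∪ Set.range Sum.inr) := by
  have := hG₁.nonempty
  have := fun i => (hH i).nonempty
  have : Nonempty (Σ i, V i) := ⟨⟨⟨0, by omega⟩, Classical.arbitrary _⟩⟩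
  have hr' : 1 < Fintype.card (Fin r) := by rw [Fintype.card_fin]; omega
  rw [cutPointProperty_joinGraph_iff hT]
  refine or_congr ⟨?_, ?_⟩ (exists_congr fun A => ?_)
  · rintro ⟨B, hB, -, rfl⟩
    exact ⟨fun i => {v | ⟨i, v⟩ ∈ B}, fun i => cutPointProperty_sigmaGraph_iff.mp hB i, rfl⟩
  · rintro ⟨T', hT', rfl⟩
    have hB : CutPointProperty (sigmaGraph H) {x | x.2 ∈ T' x.1} :=
      cutPointProperty_sigmaGraph_iff.mpr hT'
    exact ⟨_, hB, hB.one_lt_nc_sigmaGraph_compl hr', rfl⟩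
  · exact ⟨fun ⟨hA, hA', h⟩ => ⟨(hA.one_lt_nc_compl_iff hG₁).mp hA', hA, h⟩,
      fun ⟨hne, hA, h⟩ => ⟨hA, hA.one_lt_nc_compl hne, h⟩⟩
end

section
/- Let $G$ be a connected generalized block graph on $[n]$ whose binomial edge ideal is unmixed, equivalently, such that $c_G(T) = |T| + 1$ for every $T \in \mathcal{C}(G)$. Then for every $t$-minimal cut set $A$ of $G$, one has $|A| = t - 1$. -/
open SimpleGraph Set

/-!
Deleting a `t`-minimal cut set `A` leaves exactly `t` components. Every component reaches
`F \ A` for some maximal clique `F ⊇ A`, since a walk towards `A` last leaves `Aᶜ` through a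
neighbour of `A`, and such a neighbour lies in a maximal clique meeting, hence containing, `A`.
Two different maximal cliques `F, F' ⊇ A` cannot be joined outside `A`: a shortest such
connection closes, through a vertex of `A`, a cycle whose chord in the chordal graph `G` would
give a shorter connection; at length zero the generalized block condition puts the common
vertex into `⋂ {F | A ⊆ F} = A`. Minimality of `A` yields the cut point property, so
unmixedness gives `t = |A| + 1`.
-/

namespace SimpleGraph

variable {V : Type*} {G : SimpleGraph V}

lemma exists_maxClique_superset [Finite V] {K : Set V} (hK : G.IsClique K) :
    ∃ F, MaxClique G F ∧ K ⊆ F := by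
  obtain ⟨F, hKF, hF⟩ := Finite.exists_le_maximal hK
  exact ⟨F, hF, hKF⟩

lemma Walk.exists_induce_reachable_adj_notMem {s : Set V} {u b : V} (p : G.Walk u b)
    (hu : u ∈ s) (hb : b ∉ s) :
    ∃ (u' : s) (w : V), w ∉ s ∧ G.Adj u' w ∧ (G.induce s).Reachable ⟨u, hu⟩ u' := by
  induction p with
  | nil => exact absurd hu hb
  | @cons u v b huv p ih =>
    by_cases hv : v ∈ s
    · obtain ⟨u', w, hw, hadj, hreach⟩ := ih hv hb
      have huv' : (G.induce s).Adj ⟨u, hu⟩ ⟨v, hv⟩ := huv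
      exact ⟨u', w, hw, hadj, huv'.reachable.trans hreach⟩
    · exact ⟨⟨u, hu⟩, v, hv, huv, .rfl⟩

lemma IsChordal.exists_chord (hG : IsChordal G) {a : V} {f : ℕ → V} {m : ℕ} (hm : 2 ≤ m)
    (hf : Set.InjOn f (Set.Iic m)) (hfa : ∀ i ≤ m, f i ≠ a)
    (hadj : ∀ i < m, G.Adj (f i) (f (i + 1))) (ha₀ : G.Adj a (f 0)) (ham : G.Adj a (f m)) :
    (∃ l, 0 < l ∧ l < m ∧ G.Adj a (f l)) ∨
      ∃ k l, k + 2 ≤ l ∧ l ≤ m ∧ G.Adj (f k) (f l) := by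
  let c : ℕ → V := fun | 0 => a | k + 1 => f k
  have hmod : ∀ i < m + 2, (i + 1) % (m + 2) = if i = m + 1 then 0 else i + 1 := by
    intro i hi
    split_ifs with h
    · simp [h]
    · exact Nat.mod_eq_of_lt (by omega)
  have hinj : Set.InjOn c (Set.Iio (m + 2)) := by
    rintro (_ | i) hi (_ | j) hj hij
    · rfl
    · exact absurd hij.symm (hfa j (by simp at hj; omega))
    · exact absurd hij (hfa i (by simp at hi; omega))
    · simp only [Set.mem_Iio] at hi hj
      have := hf (Set.mem_Iic.2 (by omega)) (Set.mem_Iic.2 (by omega)) hij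
      omega
  have hcycle : ∀ i < m + 2, G.Adj (c i) (c ((i + 1) % (m + 2))) := by
    rintro (_ | i) hi
    · rw [hmod 0 hi, if_neg (by omega)]
      exact ha₀
    · rw [hmod _ hi]
      split_ifs with h
      · obtain rfl : i = m := by omega
        exact ham.symm
      · exact hadj i (by omega)
  obtain ⟨i, hi, j, hj, hji, hj1, hi1, hij⟩ := hG (m + 2) (by omega) c hinj hcycle
  rw [hmod i hi] at hj1
  rw [hmod j hj] at hi1
  rcases i with _ | k <;> rcases j with _ | l
  · exact absurd rfl hji
  · exact .inl ⟨l, by grind, by grind, hij⟩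
  · exact .inl ⟨k, by grind, by grind, hij.symm⟩
  · rcases lt_or_gt_of_ne (show k ≠ l by omega) with hkl | hlk
    · exact .inr ⟨k, l, by grind, by omega, hij⟩
    · exact .inr ⟨l, k, by grind, by omega, hij.symm⟩

end SimpleGraph

section MinCut

variable {V : Type*} {G : SimpleGraph V} {t : ℕ} {A : Set V}

def maxCliquesContaining (G : SimpleGraph V) (A : Set V) : Set (Set V) :=
  {F | MaxClique G F ∧ A ⊆ F}

lemma adj_of_mem_maxCliquesContaining {a : V} (ha : a ∈ A) {F : Set V}
    (hF : F ∈ maxCliquesContaining G A) {x : V} (hxA : x ∉ A) (hxF : x ∈ F) : G.Adj a x :=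
  hF.1.1 (hF.2 ha) hxF (ne_of_mem_of_not_mem ha hxA)

lemma IsMinCutSet.nonempty (hA : IsMinCutSet G A) : A.Nonempty := by
  rw [Set.nonempty_iff_ne_empty]
  rintro rfl
  exact (hA.1.trans_eq (by rw [Set.compl_empty])).false

lemma IsMinCutSet.cutPointProperty (hA : IsMinCutSet G A) : CutPointProperty G A := by
  intro i hi
  have hnot := hA.2 (A \ {i}) (Set.sdiff_singleton_ssubset.mpr hi)
  rw [IsCutSet, not_lt, Set.compl_sdiff, Set.union_comm] at hnot
  exact hnot.trans_lt hA.1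

lemma IsTMinCut.subset_of_mem (hA : IsTMinCut G t A) {F : Set V} (hF : MaxClique G F)
    {a : V} (ha : a ∈ A) (haF : a ∈ F) : A ⊆ F := by
  by_contra hAF
  exact (hA.2.2.2 F hF hAF).subset ⟨haF, ha⟩

lemma IsTMinCut.exists_mem_maxCliquesContaining_superset [Finite V] (hA : IsTMinCut G t A)
    {K : Set V} (hK : G.IsClique K) {a : V} (ha : a ∈ A) (haK : a ∈ K) :
    ∃ F ∈ maxCliquesContaining G A, K ⊆ F := by
  obtain ⟨F, hF, hKF⟩ := exists_maxClique_superset hK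
  exact ⟨F, ⟨hF, hA.subset_of_mem hF ha (hKF haK)⟩, hKF⟩

lemma IsTMinCut.eq_of_mem_of_mem (hG : GenBlockGraph G) (hA : IsTMinCut G t A) {a : V}
    (ha : a ∈ A) {F F' : Set V} (hF : F ∈ maxCliquesContaining G A)
    (hF' : F' ∈ maxCliquesContaining G A) {x : V} (hxA : x ∉ A) (hxF : x ∈ F) (hxF' : x ∈ F') :
    F = F' := by
  by_contra hne
  refine hxA (hA.2.2.1 ▸ Set.mem_sInter.2 fun F'' hF'' => ?_)
  by_cases h : F'' = F
  · exact h ▸ hxF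
  by_cases h' : F'' = F'
  · exact h' ▸ hxF'
  have hinter := hG.2.2 F F' F'' hF.1 hF'.1 hF''.1 hne (Ne.symm h) (Ne.symm h')
    ⟨a, ⟨hF.2 ha, hF'.2 ha⟩, hF''.2 ha⟩
  exact (hinter.1.subset ⟨hxF, hxF'⟩).2

lemma IsTMinCut.eq_of_adj [Finite V] (hG : GenBlockGraph G) (hA : IsTMinCut G t A) {a : V}
    (ha : a ∈ A) {F F' : Set V} (hF : F ∈ maxCliquesContaining G A)
    (hF' : F' ∈ maxCliquesContaining G A) {x y : V} (hxA : x ∉ A) (hyA : y ∉ A) (hxF : x ∈ F)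
    (hyF' : y ∈ F') (hxy : G.Adj x y) : F = F' := by
  classical
  obtain ⟨F'', hF'', hsub⟩ := hA.exists_mem_maxCliquesContaining_superset
    (G.is3Clique_triple_iff.2 ⟨adj_of_mem_maxCliquesContaining ha hF hxA hxF,
      adj_of_mem_maxCliquesContaining ha hF' hyA hyF', hxy⟩ |>.isClique) ha (by simp)
  exact (hA.eq_of_mem_of_mem hG ha hF hF'' hxA hxF (hsub (by simp))).trans
    (hA.eq_of_mem_of_mem hG ha hF'' hF' hyA (hsub (by simp)) hyF')

lemma IsTMinCut.eq_of_induce_reachable [Finite V] (hG : GenBlockGraph G) (hA : IsTMinCut G t A)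
    {a : V} (ha : a ∈ A) {F F' : Set V} (hF : F ∈ maxCliquesContaining G A)
    (hF' : F' ∈ maxCliquesContaining G A) {x y : ↥Aᶜ} (hxF : ↑x ∈ F) (hyF' : ↑y ∈ F')
    (hxy : (G.induce Aᶜ).Reachable x y) : F = F' := by
  induction hd : (G.induce Aᶜ).dist x y using Nat.strong_induction_on
    generalizing F F' x y with
  | _ n ih =>
  obtain ⟨p, hp⟩ := hxy.exists_walk_length_eq_dist
  rcases n with _ | _ | n
  · obtain rfl := hxy.dist_eq_zero_iff.mp hd
    exact hA.eq_of_mem_of_mem hG ha hF hF' x.2 hxF hyF'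
  · exact hA.eq_of_adj hG ha hF hF' x.2 y.2 hxF hyF'
      ((dist_eq_one_iff_adj (G := G.induce Aᶜ)).mp hd)
  have hlen : p.length = n + 2 := hp.trans hd
  have hchord := hG.2.1.exists_chord (f := fun i => (p.getVert i : V)) (m := n + 2) (a := a)
    (by omega)
    (fun i hi j hj hij => (p.isPath_of_length_eq_dist hp).getVert_injOn
      (by simp [hlen] at hi ⊢; omega) (by simp [hlen] at hj ⊢; omega)
      (Subtype.val_injective hij))
    (fun i _ h => (p.getVert i).2 (h ▸ ha))
    (fun i hi => p.adj_getVert_succ (by omega))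
    (by simpa using adj_of_mem_maxCliquesContaining ha hF x.2 hxF)
    (by simpa [← hlen] using adj_of_mem_maxCliquesContaining ha hF' y.2 hyF')
  rcases hchord with ⟨l, hl0, hln, hal⟩ | ⟨k, l, hkl, hln, hkl'⟩
  · obtain ⟨F'', hF'', hsub⟩ := hA.exists_mem_maxCliquesContaining_superset
      (G.isClique_pair.2 fun _ => hal) ha (by simp)
    have hlF'' : ↑(p.getVert l) ∈ F'' := hsub (by simp)
    have hx_l := (G.induce Aᶜ).dist_le (p.take l)
    have hl_y := (G.induce Aᶜ).dist_le (p.drop l)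
    simp only [Walk.take_length, Walk.drop_length, hlen] at hx_l hl_y
    exact (ih _ (by omega) hF hF'' hxF hlF'' ⟨p.take l⟩ rfl).trans
      (ih _ (by omega) hF'' hF' hlF'' hyF' ⟨p.drop l⟩ rfl)
  · have hkl'' : (G.induce Aᶜ).Adj (p.getVert k) (p.getVert l) := hkl'
    have hshort := (G.induce Aᶜ).dist_le ((p.take k).append (.cons hkl'' (p.drop l)))
    simp only [Walk.length_append, Walk.length_cons, Walk.take_length,
      Walk.drop_length, hlen] at hshort
    omega

lemma IsTMinCut.exists_induce_reachable_mem [Finite V] (hG : G.Connected)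
    (hA : IsTMinCut G t A) {a : V} (ha : a ∈ A) (x : ↥Aᶜ) :
    ∃ F ∈ maxCliquesContaining G A, ∃ y : ↥Aᶜ, ↑y ∈ F ∧ (G.induce Aᶜ).Reachable x y := by
  obtain ⟨p⟩ := hG.preconnected x a
  obtain ⟨y, b, hb, hyb, hxy⟩ := p.exists_induce_reachable_adj_notMem x.2 (not_not.2 ha)
  obtain ⟨F, hF, hsub⟩ := hA.exists_mem_maxCliquesContaining_superset
    (G.isClique_pair.2 fun _ => hyb.symm) (not_not.1 hb) (by simp)
  exact ⟨F, hF, y, hsub (by simp), hxy⟩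

lemma IsTMinCut.exists_compl_mem_of_mem_maxCliquesContaining [Finite V] (hG : G.Connected)
    (hA : IsTMinCut G t A) {a : V} (ha : a ∈ A) (x : ↥Aᶜ) {F : Set V}
    (hF : F ∈ maxCliquesContaining G A) : ∃ y : ↥Aᶜ, ↑y ∈ F := by
  obtain ⟨F', hF', y, hyF', -⟩ := hA.exists_induce_reachable_mem hG ha x
  by_contra! hFA
  obtain rfl : F = A :=
    Set.Subset.antisymm (fun v hv => by_contra fun hvA => hFA ⟨v, hvA⟩ hv) hF.2
  exact y.2 (hF.1.2 hF'.1.1 hF'.2 hyF')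

lemma IsTMinCut.nc_compl_eq [Finite V] (hG : GenBlockGraph G) (hA : IsTMinCut G t A)
    (hAne : A.Nonempty) : nc G Aᶜ = t := by
  obtain ⟨a, ha⟩ := hAne
  have : Nonempty (G.induce Aᶜ).ConnectedComponent :=
    Nat.card_pos_iff.mp (Nat.zero_le _ |>.trans_lt hA.1.1) |>.1
  obtain ⟨x₀⟩ := (Classical.arbitrary (G.induce Aᶜ).ConnectedComponent).nonempty_supp
  have hrep (F : maxCliquesContaining G A) : ∃ y : ↥Aᶜ, ↑y ∈ (F : Set V) :=
    hA.exists_compl_mem_of_mem_maxCliquesContaining hG.1 ha x₀ F.2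
  choose rep hrep using hrep
  have hclique {F : Set V} (hF : F ∈ maxCliquesContaining G A) {y z : ↥Aᶜ} (hy : ↑y ∈ F)
      (hz : ↑z ∈ F) : (G.induce Aᶜ).Reachable y z := by
    by_cases hyz : y = z
    · exact hyz ▸ .rfl
    · exact Adj.reachable (hF.1.1 hy hz (Subtype.coe_ne_coe.2 hyz))
  let φ (F : maxCliquesContaining G A) := (G.induce Aᶜ).connectedComponentMk (rep F)
  have hφ : Function.Bijective φ := by
    refine ⟨fun F₁ F₂ h => Subtype.ext ?_, fun C => ?_⟩
    · exact hA.eq_of_induce_reachable hG ha F₁.2 F₂.2 (hrep F₁) (hrep F₂)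
        (ConnectedComponent.exact h)
    · obtain ⟨x, rfl⟩ := C.exists_rep
      obtain ⟨F, hF, y, hyF, hxy⟩ := hA.exists_induce_reachable_mem hG.1 ha x
      exact ⟨⟨F, hF⟩,
        ConnectedComponent.sound ((hclique hF (hrep ⟨F, hF⟩) hyF).trans hxy.symm)⟩
  rw [nc, ← Nat.card_eq_of_bijective φ hφ, Nat.card_coe_set_eq]
  exact hA.2.1

end MinCut

/-- in a connected generalized block graph with unmixed binomial edge ideal
(`c_G(T) = |T| + 1` for all `T ∈ 𝒞(G)`), every `t`-minimal cut set has `t - 1` elements. -/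
theorem stmt6 {V : Type*} [Fintype V] (G : SimpleGraph V)
    (hG : GenBlockGraph G)
    (hunm : ∀ T : Set V, CutPointProperty G T → nc G Tᶜ = T.ncard + 1)
    (t : ℕ) (A : Set V) (hA : IsTMinCut G t A) :
    A.ncard = t - 1 := by
  have hcomponents := hA.nc_compl_eq hG hA.1.nonempty
  have hunmixed := hunm A hA.1.cutPointProperty
  omega
end
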